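/- arXiv:2403.03473 — 4 statements merged into one kernel-verified Lean document; each statement's English description precedes it below -/
import Mathlib

section
/- Let U be an N×M real matrix, M ≥ 1, λ > 0, and let g = (1/M)·U·𝟙 be the mean of the columns of U, where 𝟙 ∈ ℝᴹ is the all-ones vector. Then (λI + (1/M)·U Uᵀ)⁻¹ g = (1/(λM))·U·( 𝟙 − (λI + (1/M)·Uᵀ U)⁻¹ Uᵀ g ); in particular the preconditioned gradient is a weighted sum of the columns of U with coefficient vector (1/(λM))·( 𝟙 − (λI + (1/M)·Uᵀ U)⁻¹ Uᵀ g ). -/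
/-!
The push-through identity `(λI + c U Uᵀ) U = U (λI + c Uᵀ U)` lets `(λI + c U Uᵀ)⁻¹` pass
through `U` as `(λI + c Uᵀ U)⁻¹`, so `(λI + (1/M) U Uᵀ)⁻¹ g = (1/M) U (λI + (1/M) Uᵀ U)⁻¹ 𝟙`.
On the other side `Uᵀ g = (1/M) Uᵀ U 𝟙 = (λI + (1/M) Uᵀ U) 𝟙 - λ 𝟙`, so
`𝟙 - (λI + (1/M) Uᵀ U)⁻¹ Uᵀ g = λ (λI + (1/M) Uᵀ U)⁻¹ 𝟙`, and the two sides agree.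
-/

open Matrix

namespace Matrix

variable {m n : Type*}

lemma PosSemidef.posDef_smul_one_add [DecidableEq n] {A : Matrix n n ℝ} (hA : A.PosSemidef)
    {lam : ℝ} (hlam : 0 < lam) : (lam • (1 : Matrix n n ℝ) + A).PosDef :=
  (PosDef.one.smul hlam).add_posSemidef hA

variable [Fintype m] [Fintype n]

lemma posSemidef_transpose_mul_self (U : Matrix m n ℝ) : (Uᵀ * U).PosSemidef := by
  simpa [conjTranspose_eq_transpose_of_trivial] using posSemidef_conjTranspose_mul_self U

variable [DecidableEq m] [DecidableEq n] {R : Type*} [CommRing R]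

lemma smul_one_add_smul_mul_transpose_mul (U : Matrix m n R) (lam c : R) :
    (lam • 1 + c • (U * Uᵀ)) * U = U * (lam • 1 + c • (Uᵀ * U)) := by
  simp only [Matrix.add_mul, Matrix.mul_add, Matrix.smul_mul, Matrix.mul_smul, Matrix.mul_assoc,
    Matrix.one_mul, Matrix.mul_one]

lemma inv_mul_eq_mul_inv_of_mul_eq_mul {A : Matrix m m R} {B : Matrix n n R} {U : Matrix m n R}
    (hA : IsUnit A) (hB : IsUnit B) (h : A * U = U * B) : A⁻¹ * U = U * B⁻¹ :=
  calc A⁻¹ * U = A⁻¹ * (U * B) * B⁻¹ := by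
        rw [Matrix.mul_assoc, Matrix.mul_assoc, mul_nonsing_inv _ ((isUnit_iff_isUnit_det B).mp hB),
          Matrix.mul_one]
    _ = U * B⁻¹ := by
        rw [← h, ← Matrix.mul_assoc, nonsing_inv_mul _ ((isUnit_iff_isUnit_det A).mp hA),
          Matrix.one_mul]

lemma sub_inv_mulVec_mulVec_eq_smul {X : Matrix n n R} {lam : R} (hB : IsUnit (lam • 1 + X))
    (v : n → R) : v - (lam • 1 + X)⁻¹ *ᵥ (X *ᵥ v) = lam • (lam • 1 + X)⁻¹ *ᵥ v := by
  have hX : X *ᵥ v = (lam • 1 + X) *ᵥ v - lam • v := by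
    rw [add_mulVec, smul_mulVec, one_mulVec, add_sub_cancel_left]
  rw [hX, mulVec_sub, mulVec_mulVec, nonsing_inv_mul _ ((isUnit_iff_isUnit_det _).mp hB),
    one_mulVec, mulVec_smul, sub_sub_cancel]

end Matrix

theorem preconditioned_gradient_weighted_sum_general (N M : ℕ) (lam : ℝ) (hlam : 0 < lam)
    (U : Matrix (Fin N) (Fin M) ℝ)
    (g : Fin N → ℝ) (hg : g = (1 / (M : ℝ)) • U.mulVec (fun _ => 1)) :
    (lam • (1 : Matrix (Fin N) (Fin N) ℝ) + (1 / (M : ℝ)) • (U * Uᵀ))⁻¹.mulVec g =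
      U.mulVec ((1 / (lam * (M : ℝ))) •
        ((fun _ => 1) -
          (lam • (1 : Matrix (Fin M) (Fin M) ℝ) +
            (1 / (M : ℝ)) • (Uᵀ * U))⁻¹.mulVec (Uᵀ.mulVec g))) := by
  set c : ℝ := 1 / (M : ℝ)
  have hc : 0 ≤ c := by positivity
  have hA : IsUnit (lam • 1 + c • (U * Uᵀ)) := by
    simpa only [transpose_transpose] using ((posSemidef_transpose_mul_self Uᵀ).smul hc).posDef_smul_one_add hlam |>.isUnit
  have hB : IsUnit (lam • 1 + c • (Uᵀ * U)) :=
    ((posSemidef_transpose_mul_self U).smul hc).posDef_smul_one_add hlam |>.isUnit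
  have hUtg : Uᵀ *ᵥ g = (c • (Uᵀ * U)) *ᵥ fun _ => 1 := by
    rw [hg, mulVec_smul, mulVec_mulVec, smul_mulVec]
  have hscale : 1 / (lam * M) * lam = c := by
    rw [one_div_mul_eq_div, div_mul_cancel_left₀ hlam.ne', ← one_div]
  rw [hUtg, sub_inv_mulVec_mulVec_eq_smul hB, smul_smul, hscale, hg, mulVec_smul, mulVec_smul,
    mulVec_mulVec, mulVec_mulVec,
    inv_mul_eq_mul_inv_of_mul_eq_mul hA hB (smul_one_add_smul_mul_transpose_mul U lam c)]

/-- For an `N × M` real matrix `U`, `M ≥ 1`, `λ > 0` and `g = (1/M) • U • 𝟙` the mean of the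
columns of `U`, the preconditioned gradient satisfies
`(λ•I + (1/M)•(U * Uᵀ))⁻¹ ⬝ g = (1/(λM)) • U ⬝ (𝟙 - (λ•I + (1/M)•(Uᵀ * U))⁻¹ ⬝ (Uᵀ ⬝ g))`,
i.e. it is a weighted sum of the columns of `U` with coefficient vector
`(1/(λM)) • (𝟙 - (λ•I + (1/M)•(Uᵀ * U))⁻¹ ⬝ (Uᵀ ⬝ g))`. -/
theorem preconditioned_gradient_weighted_sum (N M : ℕ) (hM : 1 ≤ M) (lam : ℝ) (hlam : 0 < lam)
    (U : Matrix (Fin N) (Fin M) ℝ)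
    (g : Fin N → ℝ) (hg : g = (1 / (M : ℝ)) • U.mulVec (fun _ => 1)) :
    (lam • (1 : Matrix (Fin N) (Fin N) ℝ) + (1 / (M : ℝ)) • (U * Uᵀ))⁻¹.mulVec g =
      U.mulVec ((1 / (lam * (M : ℝ))) •
        ((fun _ => 1) -
          (lam • (1 : Matrix (Fin M) (Fin M) ℝ) +
            (1 / (M : ℝ)) • (Uᵀ * U))⁻¹.mulVec (Uᵀ.mulVec g))) :=
  preconditioned_gradient_weighted_sum_general N M lam hlam U g hg
end

section
/- Quadratic-form lower bound: let J̃ be an N×(ML) real matrix with Gram matrix G = J̃ᵀ J̃ symmetric positive definite with all eigenvalues in [λ_min, λ_max], let F = (1/M)·J̃ J̃ᵀ, λ > 0, let K = [I_M; I_M; …; I_M]ᵀ ∈ ℝ^{(ML)×M} be the vertical stack of L copies of the M×M identity, and let J = J̃ K. Then for every r ∈ ℝᴹ, rᵀ Jᵀ (F + λI)⁻¹ J r ≥ (λ_min · M · L / (λM + λ_min)) · ‖r‖₂². -/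
/-!
Since `(F + λI) J̃ = J̃ (G/M + λI)`, the resolvents intertwine: `(F + λI)⁻¹ J̃ = J̃ (G/M + λI)⁻¹`.
Hence, with `x = K r`, the quadratic form is `xᵀ G (G/M + λI)⁻¹ x = xᵀ φ(G) x` for
`φ(μ) = μ / (μ/M + λ)`. As `φ` is increasing on `(0, ∞)`, the spectrum of `φ(G)` lies above
`φ(λ_min) = λ_min M / (λM + λ_min)`, and `‖K r‖² = L ‖r‖²`.
-/

open Matrix

namespace Matrix

variable {m n : Type*} [Fintype m] [Fintype n] [DecidableEq m] [DecidableEq n]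

theorem exists_mulVec_eq_smul_of_mem_spectrum {A : Matrix n n ℝ} {μ : ℝ}
    (hμ : μ ∈ spectrum ℝ A) : ∃ v : n → ℝ, v ≠ 0 ∧ A *ᵥ v = μ • v := by
  rw [← spectrum_toLin', ← Module.End.hasEigenvalue_iff_mem_spectrum] at hμ
  obtain ⟨v, hv⟩ := hμ.exists_hasEigenvector
  exact ⟨v, hv.2, by simpa using hv.apply_eq_smul⟩

open scoped MatrixOrder in
theorem mul_dotProduct_le_of_le_spectrum {A : Matrix n n ℝ} (hA : IsSelfAdjoint A)
    {c : ℝ} (hc : ∀ μ ∈ spectrum ℝ A, c ≤ μ) (x : n → ℝ) : c * (x ⬝ᵥ x) ≤ x ⬝ᵥ A *ᵥ x := by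
  have h := (algebraMap_le_of_le_spectrum hc hA).dotProduct_mulVec_nonneg x
  simpa [sub_mulVec, dotProduct_sub, Algebra.algebraMap_eq_smul_one, smul_mulVec,
    dotProduct_smul, sub_nonneg] using h

theorem IsHermitian.cfc_div_mul_add_eq_mul_inv {G : Matrix n n ℝ} (hG : G.IsHermitian) {s l : ℝ}
    (hl : ∀ μ ∈ spectrum ℝ G, s * μ + l ≠ 0) :
    cfc (fun μ => μ / (s * μ + l)) G = G * (s • G + l • 1)⁻¹ := by
  have hH : cfc (fun μ => s * μ + l) G = s • G + l • 1 := by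
    rw [cfc_add .., cfc_const_mul .., cfc_id' .., cfc_const .., Algebra.algebraMap_eq_smul_one]
  have hmul : cfc (fun μ => μ / (s * μ + l)) G * (s • G + l • 1) = G := by
    rw [← hH, ← cfc_mul ..]
    conv_rhs => rw [← cfc_id' ℝ G]
    exact cfc_congr fun μ hμ => div_mul_cancel₀ μ (hl μ hμ)
  have hunit : IsUnit (s • G + l • 1).det := by
    rw [← isUnit_iff_isUnit_det, ← hH, isUnit_cfc_iff _ G]
    exact hl
  calc _ = cfc (fun μ => μ / (s * μ + l)) G * (s • G + l • 1) * (s • G + l • 1)⁻¹ := by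
        rw [Matrix.mul_assoc, mul_nonsing_inv _ hunit, Matrix.mul_one]
    _ = _ := by rw [hmul]

theorem inv_mul_eq_mul_inv_of_mul_eq {K : Type*} [CommRing K] {P : Matrix m m K}
    {Q : Matrix n n K} {X : Matrix m n K}
    (hP : IsUnit P.det) (hQ : IsUnit Q.det) (h : P * X = X * Q) : P⁻¹ * X = X * Q⁻¹ :=
  calc P⁻¹ * X = P⁻¹ * (X * Q) * Q⁻¹ := by
        rw [Matrix.mul_assoc, Matrix.mul_assoc, mul_nonsing_inv _ hQ, Matrix.mul_one]
    _ = X * Q⁻¹ := by rw [← h, ← Matrix.mul_assoc, nonsing_inv_mul _ hP, Matrix.one_mul]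

omit [Fintype n] in
theorem PosSemidef.posDef_smul_add_smul_one {B : Matrix n n ℝ} (hB : B.PosSemidef) {s l : ℝ}
    (hs : 0 ≤ s) (hl : 0 < l) : (s • B + l • 1).PosDef :=
  PosDef.posSemidef_add (hB.smul hs) (PosDef.one.smul hl)

theorem smul_mul_transpose_add_smul_one_inv_mul {s l : ℝ} (hs : 0 ≤ s) (hl : 0 < l)
    (A : Matrix m n ℝ) : (s • (A * Aᵀ) + l • 1)⁻¹ * A = A * (s • (Aᵀ * A) + l • 1)⁻¹ := by
  have hAAt := (posSemidef_self_mul_conjTranspose A).posDef_smul_add_smul_one hs hl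
  have hAtA := (posSemidef_conjTranspose_mul_self A).posDef_smul_add_smul_one hs hl
  rw [conjTranspose_eq_transpose_of_trivial] at hAAt hAtA
  refine inv_mul_eq_mul_inv_of_mul_eq ((isUnit_iff_isUnit_det _).mp hAAt.isUnit)
    ((isUnit_iff_isUnit_det _).mp hAtA.isUnit) ?_
  simp only [Matrix.add_mul, Matrix.mul_add, Matrix.smul_mul, Matrix.mul_smul, Matrix.mul_assoc,
    Matrix.one_mul, Matrix.mul_one]

theorem div_mul_dotProduct_le_dotProduct_inv_mulVec {a s l : ℝ} (ha : 0 < a) (hs : 0 ≤ s)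
    (hl : 0 < l) (A : Matrix m n ℝ) (hspec : ∀ μ ∈ spectrum ℝ (Aᵀ * A), a ≤ μ) (x : n → ℝ) :
    a / (s * a + l) * (x ⬝ᵥ x) ≤ (A *ᵥ x) ⬝ᵥ (s • (A * Aᵀ) + l • 1)⁻¹ *ᵥ (A *ᵥ x) := by
  have hG : (Aᵀ * A).IsHermitian := by simpa using isHermitian_conjTranspose_mul_self A
  have hpos : ∀ μ ∈ spectrum ℝ (Aᵀ * A), 0 < s * μ + l := fun μ hμ =>
    add_pos_of_nonneg_of_pos (mul_nonneg hs (ha.le.trans (hspec μ hμ))) hl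
  have hquad : (A *ᵥ x) ⬝ᵥ (s • (A * Aᵀ) + l • 1)⁻¹ *ᵥ (A *ᵥ x)
      = x ⬝ᵥ (Aᵀ * A * (s • (Aᵀ * A) + l • 1)⁻¹) *ᵥ x := by
    rw [mulVec_mulVec, smul_mul_transpose_add_smul_one_inv_mul hs hl, Matrix.mul_assoc,
      ← mulVec_mulVec (M := Aᵀ), dotProduct_mulVec x, vecMul_transpose]
  have hφ : ContinuousOn (fun μ => μ / (s * μ + l)) (spectrum ℝ (Aᵀ * A)) :=
    continuousOn_id.div (by fun_prop) fun μ hμ => (hpos μ hμ).ne'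
  rw [hquad, ← hG.cfc_div_mul_add_eq_mul_inv fun μ hμ => (hpos μ hμ).ne']
  refine mul_dotProduct_le_of_le_spectrum (cfc_predicate _ (Aᵀ * A)) ?_ x
  rw [cfc_map_spectrum (hf := hφ)]
  rintro _ ⟨μ, hμ, rfl⟩
  rw [div_le_div_iff₀ (by positivity) (hpos μ hμ)]
  nlinarith [hspec μ hμ]

omit [DecidableEq n] in
theorem dotProduct_comp_snd {ι R : Type*} [Fintype ι] [CommSemiring R] (u v : n → R) :
    ((fun p : ι × n => u p.2) ⬝ᵥ fun p => v p.2) = Fintype.card ι * (u ⬝ᵥ v) := by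
  simp [dotProduct, Fintype.sum_prod_type]

end Matrix

theorem quadratic_form_lower_bound_general (N M L : ℕ) (lam : ℝ) (hlam : 0 < lam)
    (Jt : Matrix (Fin N) (Fin L × Fin M) ℝ)
    (G : Matrix (Fin L × Fin M) (Fin L × Fin M) ℝ) (hG : G = Jtᵀ * Jt)
    (lamMin lamMax : ℝ) (hpos : 0 < lamMin)
    (heig : ∀ μ : ℝ, (∃ p : Fin L × Fin M → ℝ, p ≠ 0 ∧ G.mulVec p = μ • p) →
      lamMin ≤ μ ∧ μ ≤ lamMax)
    (F : Matrix (Fin N) (Fin N) ℝ) (hF : F = (1 / (M : ℝ)) • (Jt * Jtᵀ))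
    (K : Matrix (Fin L × Fin M) (Fin M) ℝ)
    (hK : K = fun p j => if p.2 = j then (1 : ℝ) else 0)
    (J : Matrix (Fin N) (Fin M) ℝ) (hJ : J = Jt * K)
    (r : Fin M → ℝ) :
    lamMin * (M : ℝ) * (L : ℝ) / (lam * (M : ℝ) + lamMin) * (r ⬝ᵥ r) ≤
      r ⬝ᵥ (Jᵀ * (F + lam • (1 : Matrix (Fin N) (Fin N) ℝ))⁻¹ * J).mulVec r := by
  -- at `M = 0` the scale `1 / M` is junk, but then `r : Fin 0 → ℝ` and both sides vanish
  rcases M.eq_zero_or_pos with rfl | hM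
  · simp
  subst hG hF hJ
  have hspec : ∀ μ ∈ spectrum ℝ (Jtᵀ * Jt), lamMin ≤ μ := fun μ hμ =>
    (heig μ (exists_mulVec_eq_smul_of_mem_spectrum hμ)).1
  have hKr : K *ᵥ r = fun p => r p.2 := by
    ext p
    simp [hK, mulVec, dotProduct]
  have hbound := div_mul_dotProduct_le_dotProduct_inv_mulVec (s := 1 / (M : ℝ)) hpos
    (by positivity) hlam Jt hspec (K *ᵥ r)
  rw [hKr, dotProduct_comp_snd, Fintype.card_fin] at hbound
  convert hbound using 1
  · field_simp
    ring
  · rw [← hKr, Matrix.mul_assoc, ← mulVec_mulVec, dotProduct_mulVec, vecMul_transpose]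
    simp only [mulVec_mulVec]

/-- Quadratic-form lower bound: let `J̃` be `N × (ML)` with Gram matrix `G = J̃ᵀ * J̃` symmetric
positive definite with all eigenvalues in `[λ_min, λ_max]`, `F = (1/M) • (J̃ * J̃ᵀ)`, `λ > 0`,
`K` the vertical stack of `L` copies of the `M × M` identity, and `J = J̃ * K`. Then for every
`r ∈ ℝᴹ`, `rᵀ Jᵀ (F + λI)⁻¹ J r ≥ (λ_min · M · L / (λM + λ_min)) · ‖r‖₂²`. -/
theorem quadratic_form_lower_bound (N M L : ℕ) (hM : 1 ≤ M) (lam : ℝ) (hlam : 0 < lam)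
    (Jt : Matrix (Fin N) (Fin L × Fin M) ℝ)
    (G : Matrix (Fin L × Fin M) (Fin L × Fin M) ℝ) (hG : G = Jtᵀ * Jt)
    (hGpd : G.PosDef) (lamMin lamMax : ℝ) (hpos : 0 < lamMin) (hle : lamMin ≤ lamMax)
    (heig : ∀ μ : ℝ, (∃ p : Fin L × Fin M → ℝ, p ≠ 0 ∧ G.mulVec p = μ • p) →
      lamMin ≤ μ ∧ μ ≤ lamMax)
    (F : Matrix (Fin N) (Fin N) ℝ) (hF : F = (1 / (M : ℝ)) • (Jt * Jtᵀ))
    (K : Matrix (Fin L × Fin M) (Fin M) ℝ)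
    (hK : K = fun p j => if p.2 = j then (1 : ℝ) else 0)
    (J : Matrix (Fin N) (Fin M) ℝ) (hJ : J = Jt * K)
    (r : Fin M → ℝ) :
    lamMin * (M : ℝ) * (L : ℝ) / (lam * (M : ℝ) + lamMin) * (r ⬝ᵥ r) ≤
      r ⬝ᵥ (Jᵀ * (F + lam • (1 : Matrix (Fin N) (Fin N) ℝ))⁻¹ * J).mulVec r :=
  quadratic_form_lower_bound_general N M L lam hlam Jt G hG lamMin lamMax hpos heig F hF K hK J hJ r
end

section
/- Perturbation-term bound: let J̃ be an N×(ML) real matrix with Gram matrix G = J̃ᵀ J̃ symmetric positive definite with all eigenvalues in [λ_min, λ_max], F = (1/M)·J̃ J̃ᵀ, λ > 0, K ∈ ℝ^{(ML)×M} the vertical stack of L copies of the M×M identity, J = J̃ K, and let η > 0. Then for every N×M real matrix D with spectral norm ‖D‖₂ ≤ λ_min/√λ_max and every r ∈ ℝᴹ, ‖(η/M)·Dᵀ (F + λI)⁻¹ J r‖₂ ≤ (η · λ_min · √L / √(λ²M² + λ_min·λM)) · ‖r‖₂. -/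
/-! The push-through identity `(J̃J̃ᵀ/M + λ)⁻¹ J̃ = J̃ (G/M + λ)⁻¹` moves the resolvent to the
parameter side, where `G/M + λ ≥ λ_min/M + λ`, so it shrinks vectors by the factor
`M / (λ_min + λM)`. Then `‖J̃‖ ≤ √λ_max` cancels against the bound on `‖D‖`,
`‖K r‖ = √L ‖r‖`, and `λ²M² + λ_min λM ≤ (λ_min + λM)²` finishes the estimate. -/

open Matrix
open scoped Matrix.Norms.L2Operator

noncomputable def vecEnorm {n : Type*} [Fintype n] (v : n → ℝ) : ℝ :=
  Real.sqrt (v ⬝ᵥ v)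

theorem Real.sqrt_sq_add_mul_le_add {a b : ℝ} (ha : 0 ≤ a) (hb : 0 ≤ b) :
    √(b ^ 2 + a * b) ≤ a + b :=
  Real.sqrt_le_iff.mpr ⟨by positivity, by nlinarith⟩

section

variable {m n : Type*}

theorem Matrix.PosSemidef.posDef_add_smul_one [DecidableEq n] {A : Matrix n n ℝ}
    (hA : A.PosSemidef) {c : ℝ} (hc : 0 < c) : (A + c • 1).PosDef :=
  PosDef.posSemidef_add hA (PosDef.one.smul hc)

variable [Fintype m] [Fintype n]

theorem vecEnorm_eq_norm_toLp (v : n → ℝ) : vecEnorm v = ‖WithLp.toLp 2 v‖ := by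
  rw [vecEnorm, norm_eq_sqrt_real_inner, EuclideanSpace.inner_toLp_toLp, star_trivial]

theorem vecEnorm_nonneg (v : n → ℝ) : 0 ≤ vecEnorm v := Real.sqrt_nonneg _

theorem vecEnorm_smul (c : ℝ) (v : n → ℝ) : vecEnorm (c • v) = |c| * vecEnorm v := by
  rw [vecEnorm_eq_norm_toLp, vecEnorm_eq_norm_toLp, WithLp.toLp_smul, norm_smul,
    Real.norm_eq_abs]

theorem dotProduct_le_vecEnorm_mul_vecEnorm (v w : n → ℝ) :
    v ⬝ᵥ w ≤ vecEnorm v * vecEnorm w := by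
  rw [vecEnorm_eq_norm_toLp, vecEnorm_eq_norm_toLp, ← star_trivial v, dotProduct_comm,
    ← EuclideanSpace.inner_toLp_toLp]
  exact real_inner_le_norm _ _

theorem vecEnorm_comp_snd (r : n → ℝ) :
    vecEnorm (fun p : m × n => r p.2) = √(Fintype.card m) * vecEnorm r := by
  rw [vecEnorm, vecEnorm, ← Real.sqrt_mul (Nat.cast_nonneg _)]
  simp [dotProduct, Fintype.sum_prod_type]

variable [DecidableEq n]

theorem vecEnorm_mulVec_le (A : Matrix m n ℝ) (v : n → ℝ) :
    vecEnorm (A *ᵥ v) ≤ ‖A‖ * vecEnorm v := by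
  rw [vecEnorm_eq_norm_toLp, vecEnorm_eq_norm_toLp]
  exact A.l2_opNorm_mulVec (WithLp.toLp 2 v)

theorem vecEnorm_mulVec_le_sqrt_mul {A : Matrix m n ℝ} {a : ℝ}
    (hA : (a • 1 - Aᵀ * A).PosSemidef) (v : n → ℝ) :
    vecEnorm (A *ᵥ v) ≤ √a * vecEnorm v := by
  have hquad := hA.dotProduct_mulVec_nonneg v
  rw [star_trivial, sub_mulVec, dotProduct_sub, smul_mulVec, one_mulVec, dotProduct_smul,
    smul_eq_mul, ← mulVec_mulVec, dotProduct_mulVec, vecMul_transpose, sub_nonneg] at hquad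
  rw [vecEnorm, vecEnorm, ← Real.sqrt_mul' _ (by simpa using dotProduct_self_star_nonneg v)]
  exact Real.sqrt_le_sqrt hquad

theorem mul_vecEnorm_le_vecEnorm_mulVec {A : Matrix n n ℝ} {c : ℝ}
    (hA : (A - c • 1).PosSemidef) (v : n → ℝ) :
    c * vecEnorm v ≤ vecEnorm (A *ᵥ v) := by
  have hquad := hA.dotProduct_mulVec_nonneg v
  rw [star_trivial, sub_mulVec, dotProduct_sub, smul_mulVec, one_mulVec, dotProduct_smul,
    smul_eq_mul, sub_nonneg] at hquad
  rcases (vecEnorm_nonneg v).eq_or_lt with hv | hv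
  · rw [← hv, mul_zero]
    exact vecEnorm_nonneg _
  · refine le_of_mul_le_mul_right ?_ hv
    calc c * vecEnorm v * vecEnorm v = c * (v ⬝ᵥ v) := by
          rw [mul_assoc, vecEnorm,
            Real.mul_self_sqrt (by simpa using dotProduct_self_star_nonneg v)]
      _ ≤ v ⬝ᵥ (A *ᵥ v) := hquad
      _ ≤ vecEnorm v * vecEnorm (A *ᵥ v) := dotProduct_le_vecEnorm_mul_vecEnorm _ _
      _ = vecEnorm (A *ᵥ v) * vecEnorm v := mul_comm _ _

theorem Matrix.PosDef.isUnit_det {A : Matrix n n ℝ} (hA : A.PosDef) : IsUnit A.det :=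
  (isUnit_iff_isUnit_det A).mp hA.isUnit

theorem vecEnorm_inv_mulVec_le {A : Matrix n n ℝ} {c : ℝ}
    (hA : (A - c • 1).PosSemidef) (hc : 0 < c) (w : n → ℝ) :
    vecEnorm (A⁻¹ *ᵥ w) ≤ vecEnorm w / c := by
  have hApd : A.PosDef := by simpa using hA.posDef_add_smul_one hc
  have hw : A *ᵥ (A⁻¹ *ᵥ w) = w := by
    rw [mulVec_mulVec, mul_nonsing_inv A hApd.isUnit_det, one_mulVec]
  rw [le_div_iff₀ hc, mul_comm]
  simpa [hw] using mul_vecEnorm_le_vecEnorm_mulVec hA (A⁻¹ *ᵥ w)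

theorem Matrix.IsHermitian.exists_mulVec_eq_eigenvalues_smul {A : Matrix n n ℝ}
    (hA : A.IsHermitian) (j : n) : ∃ p : n → ℝ, p ≠ 0 ∧ A *ᵥ p = hA.eigenvalues j • p :=
  ⟨_, fun h => hA.eigenvectorBasis.orthonormal.ne_zero j (by ext; simp [h]),
    hA.mulVec_eigenvectorBasis j⟩

theorem Matrix.IsHermitian.posSemidef_sub_smul_one {A : Matrix n n ℝ} (hA : A.IsHermitian)
    {c : ℝ} (h : ∀ μ : ℝ, (∃ p : n → ℝ, p ≠ 0 ∧ A *ᵥ p = μ • p) → c ≤ μ) :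
    (A - c • 1).PosSemidef := by
  have hB : (A - c • 1).IsHermitian := hA.sub (isHermitian_one.smul (IsSelfAdjoint.all c))
  refine hB.posSemidef_iff_eigenvalues_nonneg.mpr fun i => ?_
  have hi := hB.eigenvalues_mem_spectrum_real i
  generalize hB.eigenvalues i = μ at hi ⊢
  rw [← Algebra.algebraMap_eq_smul_one, ← spectrum.sub_singleton_eq,
    hA.spectrum_real_eq_range_eigenvalues] at hi
  obtain ⟨_, ⟨j, rfl⟩, _, rfl, rfl⟩ := hi
  exact sub_nonneg.mpr (h _ (hA.exists_mulVec_eq_eigenvalues_smul j))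

theorem Matrix.IsHermitian.posSemidef_smul_one_sub {A : Matrix n n ℝ} (hA : A.IsHermitian)
    {c : ℝ} (h : ∀ μ : ℝ, (∃ p : n → ℝ, p ≠ 0 ∧ A *ᵥ p = μ • p) → μ ≤ c) :
    (c • 1 - A).PosSemidef := by
  have hB : (c • 1 - A).IsHermitian := (isHermitian_one.smul (IsSelfAdjoint.all c)).sub hA
  refine hB.posSemidef_iff_eigenvalues_nonneg.mpr fun i => ?_
  have hi := hB.eigenvalues_mem_spectrum_real i
  generalize hB.eigenvalues i = μ at hi ⊢
  rw [← Algebra.algebraMap_eq_smul_one, ← spectrum.singleton_sub_eq,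
    hA.spectrum_real_eq_range_eigenvalues] at hi
  obtain ⟨_, rfl, _, ⟨j, rfl⟩, rfl⟩ := hi
  exact sub_nonneg.mpr (h _ (hA.exists_mulVec_eq_eigenvalues_smul j))

theorem Matrix.inv_mul_eq_mul_inv_of_mul_eq_s10 {R : Type*} [CommRing R] [DecidableEq m]
    {P : Matrix m m R} {H : Matrix n n R} {X : Matrix m n R}
    (hP : IsUnit P.det) (hH : IsUnit H.det) (h : P * X = X * H) : P⁻¹ * X = X * H⁻¹ :=
  calc P⁻¹ * X = P⁻¹ * X * H * H⁻¹ := (mul_nonsing_inv_cancel_right H _ hH).symm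
    _ = P⁻¹ * (P * X) * H⁻¹ := by rw [h, Matrix.mul_assoc P⁻¹ X H]
    _ = X * H⁻¹ := by rw [nonsing_inv_mul_cancel_left P X hP]

theorem Matrix.inv_smul_mul_transpose_add_smul_one_mul [DecidableEq m] {X : Matrix m n ℝ}
    {a b : ℝ} (ha : 0 ≤ a) (hb : 0 < b) :
    (a • (X * Xᵀ) + b • 1)⁻¹ * X = X * (a • (Xᵀ * X) + b • 1)⁻¹ := by
  have hXXt : (X * Xᵀ).PosSemidef := by simpa using posSemidef_self_mul_conjTranspose X
  have hXtX : (Xᵀ * X).PosSemidef := by simpa using posSemidef_conjTranspose_mul_self X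
  refine inv_mul_eq_mul_inv_of_mul_eq_s10 ((hXXt.smul ha).posDef_add_smul_one hb).isUnit_det
    ((hXtX.smul ha).posDef_add_smul_one hb).isUnit_det ?_
  simp only [Matrix.add_mul, Matrix.mul_add, Matrix.smul_mul, Matrix.mul_smul, Matrix.one_mul,
    Matrix.mul_one, Matrix.mul_assoc]

theorem vecEnorm_inv_smul_mul_transpose_add_smul_one_mulVec_mulVec_le [DecidableEq m]
    {X : Matrix m n ℝ} {s lam a b : ℝ} (hs : 0 ≤ s) (hlam : 0 < lam) (ha : 0 ≤ a)
    (hlow : (Xᵀ * X - a • 1).PosSemidef) (hup : (b • 1 - Xᵀ * X).PosSemidef) (w : n → ℝ) :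
    vecEnorm ((s • (X * Xᵀ) + lam • 1)⁻¹ *ᵥ (X *ᵥ w)) ≤ √b * vecEnorm w / (s * a + lam) := by
  have hH : (s • (Xᵀ * X) + lam • 1 - (s * a + lam) • 1).PosSemidef := by
    convert hlow.smul hs using 1
    module
  rw [mulVec_mulVec, inv_smul_mul_transpose_add_smul_one_mul hs hlam, ← mulVec_mulVec,
    mul_div_assoc]
  exact (vecEnorm_mulVec_le_sqrt_mul hup _).trans (mul_le_mul_of_nonneg_left
    (vecEnorm_inv_mulVec_le hH (by positivity) w) (Real.sqrt_nonneg b))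

end

theorem perturbation_term_bound_general (N M L : ℕ) (hM : 1 ≤ M) (lam : ℝ) (hlam : 0 < lam)
    (Jt : Matrix (Fin N) (Fin L × Fin M) ℝ)
    (G : Matrix (Fin L × Fin M) (Fin L × Fin M) ℝ) (hG : G = Jtᵀ * Jt)
    (lamMin lamMax : ℝ) (hpos : 0 < lamMin) (hle : lamMin ≤ lamMax)
    (heig : ∀ μ : ℝ, (∃ p : Fin L × Fin M → ℝ, p ≠ 0 ∧ G.mulVec p = μ • p) →
      lamMin ≤ μ ∧ μ ≤ lamMax)
    (F : Matrix (Fin N) (Fin N) ℝ) (hF : F = (1 / (M : ℝ)) • (Jt * Jtᵀ))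
    (K : Matrix (Fin L × Fin M) (Fin M) ℝ)
    (hK : K = fun p j => if p.2 = j then (1 : ℝ) else 0)
    (J : Matrix (Fin N) (Fin M) ℝ) (hJ : J = Jt * K)
    (eta : ℝ) (heta : 0 < eta)
    (D : Matrix (Fin N) (Fin M) ℝ) (hD : ‖D‖ ≤ lamMin / Real.sqrt lamMax)
    (r : Fin M → ℝ) :
    vecEnorm ((eta / (M : ℝ)) •
        (Dᵀ * (F + lam • (1 : Matrix (Fin N) (Fin N) ℝ))⁻¹ * J).mulVec r) ≤
      eta * lamMin * Real.sqrt (L : ℝ) /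
        Real.sqrt (lam ^ 2 * (M : ℝ) ^ 2 + lamMin * (lam * (M : ℝ))) * vecEnorm r := by
  have hmax : 0 < √lamMax := Real.sqrt_pos.mpr (hpos.trans_le hle)
  have hGherm : G.IsHermitian := by simpa [hG] using isHermitian_conjTranspose_mul_self Jt
  have hlow := hG ▸ hGherm.posSemidef_sub_smul_one fun μ hμ => (heig μ hμ).1
  have hup := hG ▸ hGherm.posSemidef_smul_one_sub fun μ hμ => (heig μ hμ).2
  have hDt : ‖Dᵀ‖ ≤ lamMin / √lamMax := by simpa using l2_opNorm_conjTranspose D ▸ hD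
  have hKr : K *ᵥ r = fun p => r p.2 := by
    ext p
    simp [hK, mulVec, dotProduct]
  calc vecEnorm ((eta / M) • (Dᵀ * (F + lam • 1)⁻¹ * J) *ᵥ r)
      = eta / M * vecEnorm (Dᵀ *ᵥ ((F + lam • 1)⁻¹ *ᵥ (Jt *ᵥ (K *ᵥ r)))) := by
        rw [vecEnorm_smul, abs_of_pos (by positivity), hJ]
        simp only [← mulVec_mulVec]
    _ ≤ eta / M * (lamMin / √lamMax *
          (√lamMax * (√L * vecEnorm r) / (1 / M * lamMin + lam))) := by
        gcongr
        refine (vecEnorm_mulVec_le _ _).trans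
          (mul_le_mul hDt ?_ (vecEnorm_nonneg _) (by positivity))
        rw [hF]
        refine (vecEnorm_inv_smul_mul_transpose_add_smul_one_mulVec_mulVec_le (by positivity)
          hlam hpos.le hlow hup _).trans_eq ?_
        rw [hKr, vecEnorm_comp_snd, Fintype.card_fin]
    _ = eta * lamMin * √L / (lamMin + lam * M) * vecEnorm r := by
        field_simp
    _ ≤ _ := by
        refine mul_le_mul_of_nonneg_right (div_le_div_of_nonneg_left (by positivity)
          (by positivity) ?_) (vecEnorm_nonneg r)
        rw [← mul_pow]
        exact Real.sqrt_sq_add_mul_le_add hpos.le (by positivity)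

/-- Perturbation-term bound: let `J̃` be `N × (ML)` with Gram matrix `G = J̃ᵀ * J̃` symmetric
positive definite with all eigenvalues in `[λ_min, λ_max]`, `F = (1/M) • (J̃ * J̃ᵀ)`, `λ > 0`,
`K` the vertical stack of `L` copies of the `M × M` identity, `J = J̃ * K`, and `η > 0`. Then for
every `N × M` matrix `D` with spectral norm `‖D‖ ≤ λ_min / √λ_max` and every `r ∈ ℝᴹ`,
`‖(η/M) • Dᵀ (F + λI)⁻¹ J r‖₂ ≤ (η · λ_min · √L / √(λ²M² + λ_min·λM)) · ‖r‖₂`. -/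
theorem perturbation_term_bound (N M L : ℕ) (hM : 1 ≤ M) (lam : ℝ) (hlam : 0 < lam)
    (Jt : Matrix (Fin N) (Fin L × Fin M) ℝ)
    (G : Matrix (Fin L × Fin M) (Fin L × Fin M) ℝ) (hG : G = Jtᵀ * Jt)
    (hGpd : G.PosDef) (lamMin lamMax : ℝ) (hpos : 0 < lamMin) (hle : lamMin ≤ lamMax)
    (heig : ∀ μ : ℝ, (∃ p : Fin L × Fin M → ℝ, p ≠ 0 ∧ G.mulVec p = μ • p) →
      lamMin ≤ μ ∧ μ ≤ lamMax)
    (F : Matrix (Fin N) (Fin N) ℝ) (hF : F = (1 / (M : ℝ)) • (Jt * Jtᵀ))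
    (K : Matrix (Fin L × Fin M) (Fin M) ℝ)
    (hK : K = fun p j => if p.2 = j then (1 : ℝ) else 0)
    (J : Matrix (Fin N) (Fin M) ℝ) (hJ : J = Jt * K)
    (eta : ℝ) (heta : 0 < eta)
    (D : Matrix (Fin N) (Fin M) ℝ) (hD : ‖D‖ ≤ lamMin / Real.sqrt lamMax)
    (r : Fin M → ℝ) :
    vecEnorm ((eta / (M : ℝ)) •
        (Dᵀ * (F + lam • (1 : Matrix (Fin N) (Fin N) ℝ))⁻¹ * J).mulVec r) ≤
      eta * lamMin * Real.sqrt (L : ℝ) /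
        Real.sqrt (lam ^ 2 * (M : ℝ) ^ 2 + lamMin * (lam * (M : ℝ))) * vecEnorm r :=
  perturbation_term_bound_general N M L hM lam hlam Jt G hG lamMin lamMax hpos hle heig F hF K hK J
    hJ eta heta D hD r
end

section
/- Lemma (iterates stay in a ball): under the setting of Theorem 1 — v : ℝᴺ → ℝᴹ continuously differentiable, J(w) = J̃(w)·K, constant Gram matrix G = J̃(w)ᵀ J̃(w) symmetric positive definite with eigenvalues in [λ_min, λ_max], damping λ = λ_min/M, FNGD iterates w_{i+1} = w_i − (η/M)·(F(w_i) + λI)⁻¹ J(w_i)·(v(w_i) − y) with 0 < η < 1 — if additionally ‖v(w_i) − y‖₂ ≤ (1 − η)^{i/2}·‖v(w₀) − y‖₂ holds for all i = 0, …, k, then ‖w_{k+1} − w₀‖₂ ≤ (√(λ_max·L)/λ_min)·‖v(w₀) − y‖₂. -/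
open Matrix

/-- The Euclidean (ℓ²) norm of a real vector. -/
noncomputable def enorm2 {n : Type*} [Fintype n] (v : n → ℝ) : ℝ :=
  Real.sqrt (v ⬝ᵥ v)


section aux

section toolkit
variable {n : Type*} [Fintype n]

lemma enorm2_eq_norm (x : n → ℝ) : enorm2 x = ‖(WithLp.equiv 2 (n → ℝ)).symm x‖ := by
  rw [EuclideanSpace.norm_eq]
  simp [enorm2, dotProduct, ← Real.sqrt_eq_rpow, sq_abs, pow_two]

lemma dotProduct_self_nonneg (x : n → ℝ) : 0 ≤ x ⬝ᵥ x :=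
  Finset.sum_nonneg fun _ _ => mul_self_nonneg _

lemma enorm2_nonneg (x : n → ℝ) : 0 ≤ enorm2 x := Real.sqrt_nonneg _

lemma enorm2_sq (x : n → ℝ) : x ⬝ᵥ x = enorm2 x ^ 2 := by
  rw [enorm2, Real.sq_sqrt (dotProduct_self_nonneg x)]

lemma enorm2_smul (c : ℝ) (x : n → ℝ) : enorm2 (c • x) = |c| * enorm2 x := by
  rw [enorm2_eq_norm, enorm2_eq_norm, WithLp.equiv_symm_apply, WithLp.toLp_smul, norm_smul, Real.norm_eq_abs]

lemma enorm2_neg (x : n → ℝ) : enorm2 (-x) = enorm2 x := by simp [enorm2]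

lemma dotProduct_le_enorm2 (x u : n → ℝ) : x ⬝ᵥ u ≤ enorm2 x * enorm2 u := by
  have h : x ⬝ᵥ u = inner ℝ ((WithLp.equiv 2 (n → ℝ)).symm x) ((WithLp.equiv 2 (n → ℝ)).symm u) := by
    simp [PiLp.inner_apply, dotProduct, RCLike.inner_apply, mul_comm]
  rw [h, enorm2_eq_norm, enorm2_eq_norm]
  exact real_inner_le_norm _ _

lemma enorm2_sum_le {ι : Type*} (s : Finset ι) (f : ι → (n → ℝ)) :
    enorm2 (∑ i ∈ s, f i) ≤ ∑ i ∈ s, enorm2 (f i) := by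
  simp only [enorm2_eq_norm]
  rw [show (WithLp.equiv 2 (n → ℝ)).symm (∑ i ∈ s, f i)
      = ∑ i ∈ s, (WithLp.equiv 2 (n → ℝ)).symm (f i) from
    map_sum (WithLp.linearEquiv 2 ℝ (n → ℝ)).symm f s]
  exact norm_sum_le _ _

lemma enorm2_pos (x : n → ℝ) (hx : x ≠ 0) : 0 < enorm2 x := by
  rw [enorm2_eq_norm]
  rw [norm_pos_iff]
  simpa using hx

end toolkit

lemma quad_upper {n : Type*} [Fintype n] [DecidableEq n]
    (G : Matrix n n ℝ) (hG : G.IsHermitian) (b : ℝ)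
    (heig : ∀ μ : ℝ, (∃ p : n → ℝ, p ≠ 0 ∧ G.mulVec p = μ • p) → μ ≤ b) :
    ∀ x : n → ℝ, x ⬝ᵥ G.mulVec x ≤ b * (x ⬝ᵥ x) := by
  intro x
  set B : Matrix n n ℝ := b • 1 - G with hBdef
  have hGt : Gᵀ = G := by simpa using hG.eq
  have hB : B.IsHermitian := by
    simp [Matrix.IsHermitian, hBdef, conjTranspose_sub, conjTranspose_smul, hGt]
  have hev : ∀ j, 0 ≤ hB.eigenvalues j := by
    intro j
    set u : n → ℝ := (WithLp.equiv 2 (n → ℝ)) (hB.eigenvectorBasis j) with hu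
    have hmul : B.mulVec u = hB.eigenvalues j • u := hB.mulVec_eigenvectorBasis j
    have hu0 : u ≠ 0 := by
      have : hB.eigenvectorBasis j ≠ 0 := hB.eigenvectorBasis.toBasis.ne_zero j
      simpa [hu] using this
    have hGu : G.mulVec u = (b - hB.eigenvalues j) • u := by
      have : B.mulVec u = b • u - G.mulVec u := by
        simp [hBdef, Matrix.sub_mulVec, Matrix.smul_mulVec, Matrix.one_mulVec]
      rw [this] at hmul
      rw [sub_smul]
      linear_combination (norm := module) -hmul
    have := heig _ ⟨u, hu0, hGu⟩
    linarith
  have hpsd : B.PosSemidef := (Matrix.IsHermitian.posSemidef_iff_eigenvalues_nonneg hB).mpr hev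
  have h0 := hpsd.dotProduct_mulVec_nonneg x
  have hsx : star x = x := by simp
  rw [hsx] at h0
  have : x ⬝ᵥ B.mulVec x = b * (x ⬝ᵥ x) - x ⬝ᵥ G.mulVec x := by
    simp [hBdef, Matrix.sub_mulVec, Matrix.smul_mulVec, Matrix.one_mulVec,
      dotProduct_sub, dotProduct_smul, smul_eq_mul]
  linarith [this ▸ h0]

lemma quad_lower {n : Type*} [Fintype n] [DecidableEq n]
    (G : Matrix n n ℝ) (hG : G.IsHermitian) (a : ℝ)
    (heig : ∀ μ : ℝ, (∃ p : n → ℝ, p ≠ 0 ∧ G.mulVec p = μ • p) → a ≤ μ) :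
    ∀ x : n → ℝ, a * (x ⬝ᵥ x) ≤ x ⬝ᵥ G.mulVec x := by
  intro x
  have h := quad_upper (-G) (by simpa [Matrix.IsHermitian] using congrArg Neg.neg hG.eq) (-a)
    (fun μ ⟨p, hp0, hp⟩ => by
      have : G.mulVec p = (-μ) • p := by
        have : -(G.mulVec p) = μ • p := by simpa [Matrix.neg_mulVec] using hp
        rw [neg_smul, ← this]; ring_nf
      linarith [heig _ ⟨p, hp0, this⟩]) x
  rw [Matrix.neg_mulVec, dotProduct_neg] at h
  linarith

lemma inv_mulVec_enorm2_le {n : Type*} [Fintype n] [DecidableEq n]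
    (A : Matrix n n ℝ) (hA : A.IsHermitian) (c : ℝ) (hc : 0 < c)
    (hq : ∀ x : n → ℝ, c * (x ⬝ᵥ x) ≤ x ⬝ᵥ A.mulVec x) :
    (A * A⁻¹ = 1 ∧ A⁻¹ * A = 1) ∧ ∀ u : n → ℝ, enorm2 (A⁻¹.mulVec u) ≤ (1 / c) * enorm2 u := by
  have hpd : A.PosDef := by
    refine Matrix.posDef_iff_dotProduct_mulVec.mpr ⟨hA, fun x hx => ?_⟩
    have hxx : 0 < x ⬝ᵥ x := by
      have := enorm2_pos x hx
      rw [enorm2_sq]; positivity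
    have := hq x
    simp only [star_trivial]
    nlinarith
  have hdet : IsUnit A.det := isUnit_iff_ne_zero.mpr hpd.det_pos.ne'
  refine ⟨⟨A.mul_nonsing_inv hdet, A.nonsing_inv_mul hdet⟩, fun u => ?_⟩
  set x := A⁻¹.mulVec u with hx
  have hAx : A.mulVec x = u := by
    rw [hx, Matrix.mulVec_mulVec, A.mul_nonsing_inv hdet, Matrix.one_mulVec]
  have h1 : c * (x ⬝ᵥ x) ≤ enorm2 x * enorm2 u := by
    calc c * (x ⬝ᵥ x) ≤ x ⬝ᵥ A.mulVec x := hq x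
    _ = x ⬝ᵥ u := by rw [hAx]
    _ ≤ enorm2 x * enorm2 u := dotProduct_le_enorm2 x u
  rw [enorm2_sq] at h1
  rcases eq_or_lt_of_le (enorm2_nonneg x) with h0 | h0
  · rw [← h0]
    exact mul_nonneg (by positivity) (enorm2_nonneg u)
  · have h2 : c * enorm2 x ≤ enorm2 u := by nlinarith
    rw [div_mul_eq_mul_div, le_div_iff₀ hc, mul_comm]
    linarith


lemma dot_gram {m k : Type*} [Fintype m] [Fintype k] (A : Matrix m k ℝ) (x : k → ℝ) :
    x ⬝ᵥ (Aᵀ * A) *ᵥ x = (A *ᵥ x) ⬝ᵥ (A *ᵥ x) := by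
  rw [← Matrix.mulVec_mulVec, Matrix.dotProduct_mulVec, Matrix.vecMul_transpose]

end aux

set_option maxHeartbeats 1000000 in
/-- Lemma (iterates stay in a ball): under the setting of Theorem 1 — `v : ℝᴺ → ℝᴹ` continuously
differentiable with transposed Jacobian `J(w)`, `J(w) = J̃(w) * K` with `K` the vertical stack of
`L` copies of the `M × M` identity, constant Gram matrix `G = J̃(w)ᵀ J̃(w)` symmetric positive
definite with eigenvalues in `[λ_min, λ_max]`, damping `λ = λ_min/M`, FNGD iterates
`w_{i+1} = w_i − (η/M) • (F(w_i) + λI)⁻¹ J(w_i) (v(w_i) − y)` with `0 < η < 1` — if additionally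
`‖v(w_i) − y‖₂ ≤ (1 − η)^{i/2} ‖v(w₀) − y‖₂` for all `i = 0, …, k`, then
`‖w_{k+1} − w₀‖₂ ≤ (√(λ_max·L)/λ_min)·‖v(w₀) − y‖₂`. -/
theorem fngd_iterates_stay_in_ball
    (M L N : ℕ) (hM : 0 < M) (hL : 0 < L) (hN : 0 < N)
    (y : Fin M → ℝ)
    (v : (Fin N → ℝ) → (Fin M → ℝ)) (hv : ContDiff ℝ 1 v)
    (J : (Fin N → ℝ) → Matrix (Fin N) (Fin M) ℝ)
    (hJ : ∀ (w : Fin N → ℝ) (x : Fin N → ℝ), fderiv ℝ v w x = (J w)ᵀ.mulVec x)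
    (K : Matrix (Fin L × Fin M) (Fin M) ℝ)
    (hK : K = fun p j => if p.2 = j then (1 : ℝ) else 0)
    (Jt : (Fin N → ℝ) → Matrix (Fin N) (Fin L × Fin M) ℝ)
    (hJK : ∀ w : Fin N → ℝ, J w = Jt w * K)
    (G : Matrix (Fin L × Fin M) (Fin L × Fin M) ℝ)
    (hGram : ∀ w : Fin N → ℝ, (Jt w)ᵀ * Jt w = G)
    (hGpd : G.PosDef) (lamMin lamMax : ℝ) (hpos : 0 < lamMin) (hle : lamMin ≤ lamMax)
    (heig : ∀ μ : ℝ, (∃ p : Fin L × Fin M → ℝ, p ≠ 0 ∧ G.mulVec p = μ • p) →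
      lamMin ≤ μ ∧ μ ≤ lamMax)
    (lam : ℝ) (hlam : lam = lamMin / (M : ℝ))
    (F : (Fin N → ℝ) → Matrix (Fin N) (Fin N) ℝ)
    (hF : ∀ w : Fin N → ℝ, F w = (1 / (M : ℝ)) • (Jt w * (Jt w)ᵀ))
    (eta : ℝ) (heta : 0 < eta) (heta1 : eta < 1)
    (w₀ : Fin N → ℝ) (w : ℕ → (Fin N → ℝ)) (hw0 : w 0 = w₀)
    (hiter : ∀ i : ℕ, w (i + 1) = w i - (eta / (M : ℝ)) •
      ((F (w i) + lam • (1 : Matrix (Fin N) (Fin N) ℝ))⁻¹.mulVec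
        ((J (w i)).mulVec (v (w i) - y))))
    (k : ℕ)
    (hdecay : ∀ i : ℕ, i ≤ k →
      enorm2 (v (w i) - y) ≤ (1 - eta) ^ ((i : ℝ) / 2) * enorm2 (v w₀ - y)) :
    enorm2 (w (k + 1) - w₀) ≤
      Real.sqrt (lamMax * (L : ℝ)) / lamMin * enorm2 (v w₀ - y) := by
  have hM0 : (0:ℝ) < M := by exact_mod_cast hM
  have hlmax : 0 < lamMax := lt_of_lt_of_le hpos hle
  have h1e : (0:ℝ) ≤ 1 - eta := by linarith
  set q : ℝ := Real.sqrt (1 - eta) with hqdef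
  have hq0 : 0 ≤ q := Real.sqrt_nonneg _
  have hqle : q ≤ 1 - eta / 2 := by
    have h2 : (1 : ℝ) - eta ≤ (1 - eta/2)^2 := by nlinarith
    calc q ≤ Real.sqrt ((1 - eta/2)^2) := Real.sqrt_le_sqrt h2
      _ = 1 - eta/2 := Real.sqrt_sq (by linarith)
  have hq1 : q < 1 := lt_of_le_of_lt hqle (by linarith)
  have hqu := quad_upper G hGpd.1 lamMax (fun μ h => (heig μ h).2)
  have hql := quad_lower G hGpd.1 lamMin (fun μ h => (heig μ h).1)
  set H : Matrix (Fin L × Fin M) (Fin L × Fin M) ℝ := (1/(M:ℝ)) • G + lam • 1 with hHdef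
  have hGt : Gᵀ = G := by simpa using hGpd.1.eq
  have hHherm : H.IsHermitian := by
    simp [Matrix.IsHermitian, hHdef, conjTranspose_add, conjTranspose_smul, hGt]
  have hc : (0:ℝ) < 2 * lamMin / M := by positivity
  have hqH : ∀ x : Fin L × Fin M → ℝ, (2*lamMin/(M:ℝ)) * (x ⬝ᵥ x) ≤ x ⬝ᵥ H *ᵥ x := by
    intro x
    have he : x ⬝ᵥ H *ᵥ x = (1/(M:ℝ)) * (x ⬝ᵥ G *ᵥ x) + lam * (x ⬝ᵥ x) := by
      simp [hHdef, Matrix.add_mulVec, Matrix.smul_mulVec, Matrix.one_mulVec,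
        dotProduct_add, dotProduct_smul, smul_eq_mul]
    have hmul := mul_le_mul_of_nonneg_left (hql x) (by positivity : (0:ℝ) ≤ 1/(M:ℝ))
    have e2 : 2*lamMin/(M:ℝ) * (x ⬝ᵥ x) = 1/(M:ℝ)*(lamMin*(x ⬝ᵥ x)) + lamMin/(M:ℝ)*(x ⬝ᵥ x) := by
      ring
    rw [he, hlam, e2]
    linarith
  obtain ⟨⟨hH1, hH2⟩, hHinv⟩ := inv_mulVec_enorm2_le H hHherm _ hc hqH
  have hlam0 : 0 < lam := by rw [hlam]; positivity
  -- per-step bound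
  have step_bound : ∀ i : ℕ, enorm2 (w (i+1) - w i) ≤
      (eta * Real.sqrt (lamMax * (L:ℝ)) / (2*lamMin)) * enorm2 (v (w i) - y) := by
    intro i
    have hT : (Jt (w i) * (Jt (w i))ᵀ)ᵀ = Jt (w i) * (Jt (w i))ᵀ := by
      rw [transpose_mul, transpose_transpose]
    have hBherm : (F (w i) + lam • (1 : Matrix (Fin N) (Fin N) ℝ)).IsHermitian := by
      simp [Matrix.IsHermitian, hF, conjTranspose_add, conjTranspose_smul,
        transpose_mul, transpose_transpose]
    have hqB : ∀ x : Fin N → ℝ, lam * (x ⬝ᵥ x) ≤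
        x ⬝ᵥ (F (w i) + lam • (1 : Matrix (Fin N) (Fin N) ℝ)) *ᵥ x := by
      intro x
      have h1 : x ⬝ᵥ (F (w i) + lam • (1 : Matrix (Fin N) (Fin N) ℝ)) *ᵥ x
          = (1/(M:ℝ)) * (x ⬝ᵥ (Jt (w i) * (Jt (w i))ᵀ) *ᵥ x) + lam * (x ⬝ᵥ x) := by
        simp [hF, Matrix.add_mulVec, Matrix.smul_mulVec, Matrix.one_mulVec,
          dotProduct_add, dotProduct_smul, smul_eq_mul]
      have h2 : x ⬝ᵥ (Jt (w i) * (Jt (w i))ᵀ) *ᵥ x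
          = ((Jt (w i))ᵀ *ᵥ x) ⬝ᵥ ((Jt (w i))ᵀ *ᵥ x) := by
        have := dot_gram (Jt (w i))ᵀ x
        rwa [transpose_transpose] at this
      have h3 : 0 ≤ (1/(M:ℝ)) * (x ⬝ᵥ (Jt (w i) * (Jt (w i))ᵀ) *ᵥ x) := by
        rw [h2]
        have := dotProduct_self_nonneg ((Jt (w i))ᵀ *ᵥ x)
        positivity
      linarith [h1.ge, h1.le]
    obtain ⟨⟨hB1, hB2⟩, -⟩ := inv_mulVec_enorm2_le _ hBherm lam hlam0 hqB
    -- push-through identity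
    have hcomm : (F (w i) + lam • (1 : Matrix (Fin N) (Fin N) ℝ)) * Jt (w i)
        = Jt (w i) * H := by
      rw [hF, hHdef, Matrix.add_mul, Matrix.smul_mul, Matrix.smul_mul, Matrix.one_mul,
        Matrix.mul_assoc, hGram, Matrix.mul_add, Matrix.mul_smul, Matrix.mul_smul,
        Matrix.mul_one]
    have hpush : (F (w i) + lam • (1 : Matrix (Fin N) (Fin N) ℝ))⁻¹ * Jt (w i)
        = Jt (w i) * H⁻¹ := by
      have h1 : (F (w i) + lam • (1 : Matrix (Fin N) (Fin N) ℝ))⁻¹ *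
          ((F (w i) + lam • (1 : Matrix (Fin N) (Fin N) ℝ)) * (Jt (w i) * H⁻¹))
          = Jt (w i) * H⁻¹ := by
        rw [← Matrix.mul_assoc, hB2, Matrix.one_mul]
      have h2 : (F (w i) + lam • (1 : Matrix (Fin N) (Fin N) ℝ)) * (Jt (w i) * H⁻¹)
          = Jt (w i) := by
        rw [← Matrix.mul_assoc, hcomm, Matrix.mul_assoc, hH1, Matrix.mul_one]
      rw [h2] at h1
      exact h1
    -- rewrite the step
    have hstep : w (i+1) - w i = -((eta/(M:ℝ)) •
        (Jt (w i) *ᵥ (H⁻¹ *ᵥ (K *ᵥ (v (w i) - y))))) := by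
      rw [hiter i, sub_sub_cancel_left]
      congr 2
      rw [hJK, ← Matrix.mulVec_mulVec (v (w i) - y) (Jt (w i)) K,
        Matrix.mulVec_mulVec _ _ (Jt (w i)), hpush,
        ← Matrix.mulVec_mulVec _ (Jt (w i)) H⁻¹]
    -- norms
    have hKr : enorm2 (K *ᵥ (v (w i) - y)) = Real.sqrt (L:ℝ) * enorm2 (v (w i) - y) := by
      have hKv : ∀ p : Fin L × Fin M, (K *ᵥ (v (w i) - y)) p = (v (w i) - y) p.2 := by
        intro p
        simp [hK, Matrix.mulVec, dotProduct]
      have hdot : (K *ᵥ (v (w i) - y)) ⬝ᵥ (K *ᵥ (v (w i) - y))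
          = (L:ℝ) * ((v (w i) - y) ⬝ᵥ (v (w i) - y)) := by
        simp only [dotProduct, hKv]
        rw [Fintype.sum_prod_type]
        simp [Finset.sum_const, nsmul_eq_mul]
      rw [enorm2, hdot, Real.sqrt_mul (by positivity : (0:ℝ) ≤ (L:ℝ))]
      rfl
    have hJtz : ∀ z : Fin L × Fin M → ℝ,
        enorm2 (Jt (w i) *ᵥ z) ≤ Real.sqrt lamMax * enorm2 z := by
      intro z
      have h1 : (Jt (w i) *ᵥ z) ⬝ᵥ (Jt (w i) *ᵥ z) ≤ lamMax * (z ⬝ᵥ z) := by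
        rw [← dot_gram, hGram]
        exact hqu z
      calc enorm2 (Jt (w i) *ᵥ z) = Real.sqrt ((Jt (w i) *ᵥ z) ⬝ᵥ (Jt (w i) *ᵥ z)) := rfl
        _ ≤ Real.sqrt (lamMax * (z ⬝ᵥ z)) := Real.sqrt_le_sqrt h1
        _ = Real.sqrt lamMax * enorm2 z := by
            rw [Real.sqrt_mul hlmax.le]
            rfl
    -- combine
    rw [hstep, enorm2_neg, enorm2_smul]
    have habs : |eta/(M:ℝ)| = eta/(M:ℝ) := abs_of_pos (by positivity)
    rw [habs]
    calc eta/(M:ℝ) * enorm2 (Jt (w i) *ᵥ (H⁻¹ *ᵥ (K *ᵥ (v (w i) - y))))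
        ≤ eta/(M:ℝ) * (Real.sqrt lamMax * enorm2 (H⁻¹ *ᵥ (K *ᵥ (v (w i) - y)))) := by
          have := hJtz (H⁻¹ *ᵥ (K *ᵥ (v (w i) - y)))
          have h0 : (0:ℝ) ≤ eta/(M:ℝ) := by positivity
          exact mul_le_mul_of_nonneg_left this h0
      _ ≤ eta/(M:ℝ) * (Real.sqrt lamMax *
            ((1/(2*lamMin/(M:ℝ))) * enorm2 (K *ᵥ (v (w i) - y)))) := by
          have := hHinv (K *ᵥ (v (w i) - y))
          have h0 : (0:ℝ) ≤ eta/(M:ℝ) * Real.sqrt lamMax := by positivity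
          calc eta/(M:ℝ) * (Real.sqrt lamMax * enorm2 (H⁻¹ *ᵥ (K *ᵥ (v (w i) - y))))
              = (eta/(M:ℝ) * Real.sqrt lamMax) * enorm2 (H⁻¹ *ᵥ (K *ᵥ (v (w i) - y))) := by ring
            _ ≤ (eta/(M:ℝ) * Real.sqrt lamMax) *
                ((1/(2*lamMin/(M:ℝ))) * enorm2 (K *ᵥ (v (w i) - y))) :=
                mul_le_mul_of_nonneg_left this h0
            _ = eta/(M:ℝ) * (Real.sqrt lamMax *
                ((1/(2*lamMin/(M:ℝ))) * enorm2 (K *ᵥ (v (w i) - y)))) := by ring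
      _ = (eta * Real.sqrt (lamMax * (L:ℝ)) / (2*lamMin)) * enorm2 (v (w i) - y) := by
          rw [hKr, Real.sqrt_mul hlmax.le]
          field_simp
  -- sum up
  have hsum : w (k+1) - w₀ = ∑ i ∈ Finset.range (k+1), (w (i+1) - w i) := by
    rw [Finset.sum_range_sub, hw0]
  have hqpow : ∀ i : ℕ, (1 - eta) ^ ((i:ℝ)/2) = q ^ i := by
    intro i
    rw [hqdef, Real.sqrt_eq_rpow, ← Real.rpow_natCast ((1-eta) ^ ((1:ℝ)/2)) i,
      ← Real.rpow_mul h1e]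
    congr 1
    ring
  have hR0 : 0 ≤ enorm2 (v w₀ - y) := enorm2_nonneg _
  set β := eta * Real.sqrt (lamMax * (L:ℝ)) / (2*lamMin) with hβdef
  have hβ0 : 0 ≤ β := by positivity
  have hsum2 : enorm2 (w (k+1) - w₀) ≤
      β * enorm2 (v w₀ - y) * ∑ i ∈ Finset.range (k+1), q ^ i := by
    rw [hsum]
    calc enorm2 (∑ i ∈ Finset.range (k+1), (w (i+1) - w i))
        ≤ ∑ i ∈ Finset.range (k+1), enorm2 (w (i+1) - w i) := enorm2_sum_le _ _
      _ ≤ ∑ i ∈ Finset.range (k+1), β * enorm2 (v w₀ - y) * q ^ i := by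
          apply Finset.sum_le_sum
          intro i hi
          have hik : i ≤ k := Nat.lt_succ_iff.mp (Finset.mem_range.mp hi)
          have hd := hdecay i hik
          rw [hqpow i] at hd
          calc enorm2 (w (i+1) - w i) ≤ β * enorm2 (v (w i) - y) := step_bound i
            _ ≤ β * (q ^ i * enorm2 (v w₀ - y)) := mul_le_mul_of_nonneg_left hd hβ0
            _ = β * enorm2 (v w₀ - y) * q ^ i := by ring
      _ = β * enorm2 (v w₀ - y) * ∑ i ∈ Finset.range (k+1), q ^ i := by
          rw [← Finset.mul_sum]
  -- geometric series
  have hgeom : ∑ i ∈ Finset.range (k+1), q ^ i ≤ 1 / (1 - q) := by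
    have h := geom_sum_mul q (k+1)
    have h1q : 0 < 1 - q := by linarith
    have hqk : 0 ≤ q ^ (k+1) := pow_nonneg hq0 _
    rw [le_div_iff₀ h1q]
    nlinarith [h]
  have h1q : 0 < 1 - q := by linarith
  have hS0 : 0 ≤ ∑ i ∈ Finset.range (k+1), q ^ i :=
    Finset.sum_nonneg fun i _ => pow_nonneg hq0 _
  have hfinal : β * enorm2 (v w₀ - y) * ∑ i ∈ Finset.range (k+1), q ^ i ≤
      Real.sqrt (lamMax * (L:ℝ)) / lamMin * enorm2 (v w₀ - y) := by
    have h1 : β * enorm2 (v w₀ - y) * ∑ i ∈ Finset.range (k+1), q ^ i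
        ≤ β * enorm2 (v w₀ - y) * (1/(1-q)) := by
      have h0 : 0 ≤ β * enorm2 (v w₀ - y) := mul_nonneg hβ0 hR0
      exact mul_le_mul_of_nonneg_left hgeom h0
    have h2 : β * enorm2 (v w₀ - y) * (1/(1-q)) ≤
        Real.sqrt (lamMax * (L:ℝ)) / lamMin * enorm2 (v w₀ - y) := by
      have hS : 0 ≤ Real.sqrt (lamMax * (L:ℝ)) := Real.sqrt_nonneg _
      have heta2 : eta ≤ 2 * (1 - q) := by linarith
      have hkey : β * (1/(1-q)) ≤ Real.sqrt (lamMax * (L:ℝ)) / lamMin := by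
        have h1q : (0:ℝ) < 1 - q := by linarith
        rw [hβdef, mul_one_div, div_div,
          div_le_div_iff₀ (mul_pos (by positivity : (0:ℝ) < 2*lamMin) h1q) hpos]
        nlinarith [mul_le_mul_of_nonneg_left heta2 (mul_nonneg hS hpos.le)]
      calc β * enorm2 (v w₀ - y) * (1/(1-q))
          = (β * (1/(1-q))) * enorm2 (v w₀ - y) := by ring
        _ ≤ Real.sqrt (lamMax * (L:ℝ)) / lamMin * enorm2 (v w₀ - y) :=
            mul_le_mul_of_nonneg_right hkey hR0
    linarith
  linarith [hsum2, hfinal]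
end
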